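/- arXiv:1703.08828 — 4 statements merged into one kernel-verified Lean document; each statement's English description precedes it below -/
import Mathlib

section
/- Let S be a subset of the non-negative integers with 0 in S, whose complement in Z_{>=0} is finite with largest element 2g - 1 (so S contains all integers >= 2g, and exactly g elements of [0, 2g) lie outside S in the 'symmetric' case). Define phi(m) = #(S intersect [0, m)) for integers m >= 0, extended by phi(m) = 0 for m < 0, and Phi(t, m) = phi(m) - t*m/2 for real t in [0,2]. Suppose S satisfies the symmetry #(S intersect [0, 2g)) = g and phi(2g - v) = g - v + phi(v) for all 0 <= v <= 2g. Then for all real s in [0, 2]: max over v in {1, ..., 2g-1} of (-2*phi(v) - s*(g - v)) equals max over v in {1, ..., 2g-1} of (-2*phi(v) - (2-s)*(g - v)). That is, the truncated Upsilon function Upsilon^{tr}(s) := max_{1<=v<=2g-1} (-2 phi(v) - s(g-v)) satisfies Upsilon^{tr}(s) = Upsilon^{tr}(2-s). -/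
/-! The reflection `v ↦ 2g - v` preserves `{1, …, 2g - 1}` and, by the symmetry of `phi`,
turns the term at slope `s` into the term at slope `2 - s`; hence both maxima agree. -/

theorem Finset.sup'_le_sup'_of_mapsTo {ι α : Type*} [SemilatticeSup α] {s : Finset ι}
    (hs : s.Nonempty) {f g : ι → α} {σ : ι → ι} (hσ : ∀ i ∈ s, σ i ∈ s)
    (hfg : ∀ i ∈ s, f i = g (σ i)) : s.sup' hs f ≤ s.sup' hs g :=
  sup'_le hs f fun i hi => (hfg i hi).trans_le (le_sup' g (hσ i hi))

/-- The paper's `Υ̃(s, v)`. -/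
def upsilonTerm (g : ℕ) (phi : ℕ → ℕ) (s : ℝ) (v : ℕ) : ℝ :=
  -2 * (phi v : ℝ) - s * ((g : ℝ) - v)

theorem upsilonTerm_reflect {g : ℕ} {phi : ℕ → ℕ}
    (hsym : ∀ v ≤ 2 * g, (phi (2 * g - v) : ℤ) = (g : ℤ) - v + phi v)
    (s : ℝ) {v : ℕ} (hv : v ≤ 2 * g) :
    upsilonTerm g phi s v = upsilonTerm g phi (2 - s) (2 * g - v) := by
  have hphi : (phi (2 * g - v) : ℝ) = g - v + phi v := by exact_mod_cast hsym v hv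
  simp only [upsilonTerm, hphi, Nat.cast_sub hv]
  push_cast
  ring

/-- Symmetry of the truncated Upsilon function: `Υ^tr(s) = Υ^tr(2-s)`. -/
theorem stmt4 (g : ℕ) (hg : 1 ≤ g)
    (phi : ℕ → ℕ)
    (hsym : ∀ v ≤ 2 * g, (phi (2 * g - v) : ℤ) = (g : ℤ) - v + phi v)
    (s : ℝ) :
    ((Finset.Icc 1 (2 * g - 1)).sup' (Finset.nonempty_Icc.mpr (by omega))
        fun v => -2 * (phi v : ℝ) - s * ((g : ℝ) - v)) =
    ((Finset.Icc 1 (2 * g - 1)).sup' (Finset.nonempty_Icc.mpr (by omega))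
        fun v => -2 * (phi v : ℝ) - (2 - s) * ((g : ℝ) - v)) := by
  have hmaps : ∀ v ∈ Finset.Icc 1 (2 * g - 1), 2 * g - v ∈ Finset.Icc 1 (2 * g - 1) := by
    simp only [Finset.mem_Icc]
    omega
  have hle : ∀ v ∈ Finset.Icc 1 (2 * g - 1), v ≤ 2 * g := fun v hv => by
    simp only [Finset.mem_Icc] at hv
    omega
  apply le_antisymm
  · exact Finset.sup'_le_sup'_of_mapsTo _ hmaps fun v hv => upsilonTerm_reflect hsym s (hle v hv)
  · refine Finset.sup'_le_sup'_of_mapsTo _ hmaps fun v hv => ?_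
    have h := upsilonTerm_reflect hsym (2 - s) (hle v hv)
    rwa [sub_sub_cancel] at h
end

section
/- Let S be a subset of Z_{>=0} containing 0 whose complement in Z_{>=0} is finite with maximum 2g-1 (for some g >= 1), satisfying the symmetry phi(2g - v) = g - v + phi(v) for 0 <= v <= 2g where phi(m) := #(S intersect [0, m)). Define Upsilon(s) = max over m in {0, 1, ..., 2g} of (-2*phi(m) - s*(g - m)) for s in [0, 2]. Then Upsilon(s) = Upsilon(2 - s) for all s in [0, 2]. -/
/-! The reflection `m ↦ 2g - m` permutes `{0, …, 2g}`, and the symmetry of `phi` turns the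
`s`-term at `2g - m` into the `(2 - s)`-term at `m`; so both maxima run over the same values. -/

theorem Finset.sup'_eq_sup'_of_leftInvOn {α β : Type*} [SemilatticeSup α] {s : Finset β}
    (H : s.Nonempty) {f h : β → α} (σ : β → β) (hσ : Set.MapsTo σ s s)
    (hinv : Set.LeftInvOn σ σ s) (hfh : ∀ x ∈ s, f (σ x) = h x) :
    s.sup' H f = s.sup' H h := by
  apply le_antisymm
  · refine sup'_le _ _ fun x hx => ?_
    calc f x = f (σ (σ x)) := by rw [hinv hx]
      _ = h (σ x) := hfh _ (hσ hx)
      _ ≤ s.sup' H h := le_sup' h (hσ hx)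
  · exact sup'_le _ _ fun x hx => hfh x hx ▸ le_sup' f (hσ hx)

theorem upsilon_term_reflect {g v : ℕ} {phi : ℕ → ℕ} (hv : v ≤ 2 * g)
    (hsym : (phi (2 * g - v) : ℤ) = (g : ℤ) - v + phi v) (s : ℝ) :
    -2 * (phi (2 * g - v) : ℝ) - s * ((g : ℝ) - (2 * g - v : ℕ)) =
      -2 * (phi v : ℝ) - (2 - s) * ((g : ℝ) - v) := by
  have hsymℝ : (phi (2 * g - v) : ℝ) = g - v + phi v := by exact_mod_cast hsym
  rw [hsymℝ, Nat.cast_sub hv]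
  push_cast
  ring

/-- Symmetry of the Upsilon invariant of an L-space knot: `Υ(s) = Υ(2-s)`. -/
theorem stmt5 (g : ℕ) (phi : ℕ → ℕ)
    (hsym : ∀ v ≤ 2 * g, (phi (2 * g - v) : ℤ) = (g : ℤ) - v + phi v)
    (s : ℝ) :
    ((Finset.Icc 0 (2 * g)).sup' (Finset.nonempty_Icc.mpr (by omega))
        fun m => -2 * (phi m : ℝ) - s * ((g : ℝ) - m)) =
    ((Finset.Icc 0 (2 * g)).sup' (Finset.nonempty_Icc.mpr (by omega))
        fun m => -2 * (phi m : ℝ) - (2 - s) * ((g : ℝ) - m)) := by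
  refine Finset.sup'_eq_sup'_of_leftInvOn _ (fun m => 2 * g - m) ?_ ?_ ?_
  · intro m hm
    simp only [Finset.coe_Icc, Set.mem_Icc] at hm ⊢
    omega
  · intro m hm
    simp only [Finset.coe_Icc, Set.mem_Icc] at hm
    show 2 * g - (2 * g - m) = m
    omega
  · intro m hm
    have hm : m ≤ 2 * g := (Finset.mem_Icc.mp hm).2
    exact upsilon_term_reflect hm (hsym m hm) s
end

section
/- Let p >= 2 and q be coprime positive integers, g >= 0, and let S_K be a subset of Z_{>=0} containing 0 with Z_{>=2g} subset of S_K and #(S_K intersect [0,2g)) = g. Assume 2gp <= q. Define S = p*S_K + q*Z_{>=0} = { p*a + q*b : a in S_K, b in Z_{>=0} }, and phi(m) = #(S intersect [0, m)), Phi(t,m) = phi(m) - t*m/2. Fix an integer i with 0 <= i < p and a real t with 2i/p <= t <= 2(i+1)/p. Then the minimum of Phi(t, m) over all integers m with 0 <= m <= 2(pg + (p-1)(q-1)/2) equals the minimum of Phi(t, m) over integers m with iq - p < m <= iq + 2gp. -/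
/-!
Write `Φ = Φ(t, ·)`. Over a window `[m, m + p)` the value of `Φ` changes by
`#(S ∩ [m, m + p)) - t p / 2`. An element `p a + q b` of a window is determined by `b mod p`,
and, `q` being a unit mod `p`, different `b < p` occur at different elements. Hence a window below
`i q` holds at most `i` elements of `S` (all have `b < i`), while a window beyond `i q + 2 g p`
holds the `i + 1` elements with `b = 0, …, i` and `a ≥ 2 g`.
Since `2 i ≤ t p ≤ 2 (i + 1)`, `Φ` does not increase along `p`-steps up to `i q` and does not
decrease along `p`-steps down to `i q + 2 g p`, so each value on `[0, N]`, `N = 2 p g + (p-1)(q-1)`,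
is undercut in the window `(i q - p, i q + 2 g p]`. Conversely, the parts of the window outside
`[0, N]` are harmless: left of `0`, `Φ` exceeds `Φ 0` as `t ≥ 0`, and right of `N`, it exceeds
`Φ N` because every integer `≥ N` lies in `S` and `t ≤ 2`.
-/

open Set

section StepLocalization

variable {f : ℤ → ℝ} {p : ℤ}

theorem exists_mem_Ioc_le_of_step_up {L : ℤ} (hp : 0 < p)
    (hstep : ∀ m, 0 ≤ m → m + p ≤ L → f (m + p) ≤ f m) {m : ℤ} (hm₀ : 0 ≤ m) (hmL : m ≤ L) :
    ∃ m' ∈ Ioc (L - p) L, f m' ≤ f m := by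
  by_cases hm : L - p < m
  · exact ⟨m, ⟨hm, hmL⟩, le_rfl⟩
  · obtain ⟨m', hm', hle⟩ :=
      exists_mem_Ioc_le_of_step_up hp hstep (m := m + p) (by omega) (by omega)
    exact ⟨m', hm', hle.trans (hstep m hm₀ (by omega))⟩
termination_by (L - m).toNat
decreasing_by omega

theorem exists_mem_Ioc_le_of_step_down {R : ℤ} (hp : 0 < p)
    (hstep : ∀ m, R < m → f (m - p) ≤ f m) {m : ℤ} (hRm : R - p < m) :
    ∃ m' ∈ Ioc (R - p) R, f m' ≤ f m := by
  by_cases hm : m ≤ R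
  · exact ⟨m, ⟨hRm, hm⟩, le_rfl⟩
  · obtain ⟨m', hm', hle⟩ :=
      exists_mem_Ioc_le_of_step_down hp hstep (m := m - p) (by omega)
    exact ⟨m', hm', hle.trans (hstep m (by omega))⟩
termination_by (m - R).toNat
decreasing_by omega

end StepLocalization

theorem csInf_image_le_csInf_image {α β : Type*} [ConditionallyCompleteLattice β] {f : α → β}
    {A B : Set α} (hA : A.Nonempty) (hB : BddBelow (f '' B))
    (h : ∀ a ∈ A, ∃ b ∈ B, f b ≤ f a) : sInf (f '' B) ≤ sInf (f '' A) := by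
  refine le_csInf (hA.image f) ?_
  rintro _ ⟨a, ha, rfl⟩
  obtain ⟨b, hb, hba⟩ := h a ha
  exact (csInf_le hB ⟨b, hb, rfl⟩).trans hba

theorem sInf_image_Icc_eq_sInf_image_Ioc {f : ℤ → ℝ} {p N L R : ℤ} (hp : 0 < p) (hN : 0 ≤ N)
    (hLR : L ≤ R) (hle_zero : ∀ m ≤ 0, f 0 ≤ f m) (hge_N : ∀ m ≥ N, f N ≤ f m)
    (hstep_up : ∀ m, 0 ≤ m → m + p ≤ L → f (m + p) ≤ f m)
    (hstep_down : ∀ m, R < m → f (m - p) ≤ f m) :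
    sInf (f '' Icc 0 N) = sInf (f '' Ioc (L - p) R) := by
  refine le_antisymm (csInf_image_le_csInf_image ⟨L, by omega, hLR⟩
    ((finite_Icc 0 N).image f).bddBelow fun m _ => ?_)
    (csInf_image_le_csInf_image ⟨0, le_rfl, hN⟩ ((finite_Ioc _ R).image f).bddBelow ?_)
  · rcases le_or_gt m 0 with hm | hm
    · exact ⟨0, ⟨le_rfl, hN⟩, hle_zero m hm⟩
    rcases le_or_gt m N with hmN | hmN
    · exact ⟨m, ⟨hm.le, hmN⟩, le_rfl⟩
    · exact ⟨N, ⟨hN, le_rfl⟩, hge_N m hmN.le⟩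
  · rintro m ⟨hm₀, -⟩
    rcases le_or_gt m L with hmL | hmL
    · obtain ⟨m', ⟨hm'₁, hm'₂⟩, hle⟩ := exists_mem_Ioc_le_of_step_up hp hstep_up hm₀ hmL
      exact ⟨m', ⟨hm'₁, hm'₂.trans hLR⟩, hle⟩
    rcases le_or_gt m R with hmR | hmR
    · exact ⟨m, ⟨by omega, hmR⟩, le_rfl⟩
    · obtain ⟨m', ⟨hm'₁, hm'₂⟩, hle⟩ := exists_mem_Ioc_le_of_step_down hp hstep_down (m := m)
        (by omega)
      exact ⟨m', ⟨by omega, hm'₂⟩, hle⟩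

theorem exists_mul_add_mul_eq_of_le {p q n : ℕ} (hpq : p.Coprime q) (hp : 1 < p) (hq : 0 < q)
    (hn : (p - 1) * (q - 1) ≤ n) : ∃ x y, p * x + q * y = n := by
  rcases (Nat.one_le_iff_ne_zero.2 hq.ne').eq_or_lt with rfl | hq
  · exact ⟨0, n, by simp⟩
  have hfrob : p * q - p - q < n := by
    have hpos : 0 < (p - 1) * (q - 1) := Nat.mul_pos (by omega) (by omega)
    have key : (p - 1) * (q - 1) + p + q = p * q + 1 := by
      obtain ⟨a, rfl⟩ : ∃ a, p = a + 1 := ⟨p - 1, by omega⟩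
      obtain ⟨b, rfl⟩ : ∃ b, q = b + 1 := ⟨q - 1, by omega⟩
      simp only [Nat.add_sub_cancel]
      ring
    omega
  have hmem : n ∈ AddSubmonoid.closure {p, q} :=
    by_contra fun h => (frobeniusNumber_pair hpq hp hq).2 h |>.not_gt hfrob
  obtain ⟨x, y, hxy⟩ := (AddSubmonoid.mem_closure_pair _ _ _).1 hmem
  exact ⟨x, y, by rw [← hxy, smul_eq_mul, smul_eq_mul, mul_comm p, mul_comm q]⟩

theorem ncard_inter_Ico_le_of_subset_span {p q i : ℕ} {S : Set ℕ}
    (hS : ∀ n ∈ S, ∃ x y, n = p * x + q * y) {a : ℕ} (ha : a + p ≤ i * q) :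
    (S ∩ Ico a (a + p)).ncard ≤ i := by
  choose! x y hxy using hS
  have hmodEq : ∀ n ∈ S, n ≡ q * y n [MOD p] := fun n hn =>
    (congrArg (· % p) (hxy n hn)).trans (Nat.mul_add_mod _ _ _)
  calc (S ∩ Ico a (a + p)).ncard ≤ (Iio i).ncard := by
        refine ncard_le_ncard_of_injOn (fun n => y n % p) ?_ ?_
        · rintro n ⟨hnS, -, hn⟩
          have hle : q * y n ≤ n := (Nat.le_add_left _ _).trans_eq (hxy n hnS).symm
          have : q * y n < q * i := by linarith [mul_comm i q]
          exact (Nat.mod_le _ _).trans_lt (Nat.lt_of_mul_lt_mul_left this)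
        · rintro n₁ ⟨hn₁, hn₁a, hn₁b⟩ n₂ ⟨hn₂, hn₂a, hn₂b⟩ (h : y n₁ % p = y n₂ % p)
          refine ((hmodEq n₁ hn₁).trans ((Nat.ModEq.mul_left q h).trans
            (hmodEq n₂ hn₂).symm)).eq_of_abs_lt ?_
          rw [abs_sub_lt_iff]
          omega
    _ = i := ncard_Iio_nat i

theorem le_ncard_inter_Ico_of_span_subset {p q g i : ℕ} (hpq : p.Coprime q) (hi : i < p)
    {S : Set ℕ} (hS : ∀ x, 2 * g ≤ x → ∀ y, p * x + q * y ∈ S) {m : ℕ}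
    (hm : i * q + 2 * g * p < m) :
    i + 1 ≤ (S ∩ Ico (m - p) m).ncard := by
  have hp : 0 < p := by omega
  -- `e r` is the largest element of `q * r + p * ℕ` below `m`
  let e : ℕ → ℕ := fun r => p * ((m - 1 - q * r) / p) + q * r
  calc i + 1 = (Iio (i + 1)).ncard := (ncard_Iio_nat _).symm
    _ ≤ (S ∩ Ico (m - p) m).ncard := by
        refine ncard_le_ncard_of_injOn e ?_ ?_ ((finite_Ico _ _).inter_of_right S)
        · intro r (hr : r < i + 1)
          have hqr : q * r ≤ q * i := Nat.mul_le_mul_left q (Nat.lt_succ_iff.1 hr)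
          obtain ⟨d, hd⟩ : ∃ d, d + q * r + 1 = m := ⟨m - 1 - q * r, by have := mul_comm i q; omega⟩
          have hdm : m - 1 - q * r = d := by omega
          have hdiv := Nat.mul_div_le d p
          have hlt := Nat.lt_mul_div_succ d hp
          rw [mul_add, mul_one] at hlt
          simp only [e, hdm]
          refine ⟨hS _ ?_ r, ?_, ?_⟩
          · rw [Nat.le_div_iff_mul_le hp]
            linarith [mul_comm i q]
          · omega
          · omega
        · intro r₁ (hr₁ : r₁ < i + 1) r₂ (hr₂ : r₂ < i + 1) h
          have : q * r₁ ≡ q * r₂ [MOD p] := by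
            simpa only [e, Nat.ModEq, Nat.mul_add_mod] using congrArg (· % p) h
          exact (Nat.ModEq.cancel_left_of_coprime hpq this).eq_of_lt_of_lt (by omega) (by omega)

-- `2 p g + (p - 1) (q - 1)` is the conductor `2 g(K_{p,q})` of the cable semigroup.
theorem Ici_conductor_subset {p q g : ℕ} (hpq : p.Coprime q) (hp : 1 < p) (hq : 0 < q)
    {S : Set ℕ} (hS : ∀ x, 2 * g ≤ x → ∀ y, p * x + q * y ∈ S) :
    Ici (2 * p * g + (p - 1) * (q - 1)) ⊆ S := fun n (hn : _ ≤ n) => by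
  obtain ⟨x, y, hxy⟩ := exists_mul_add_mul_eq_of_le hpq hp hq
    (by omega : (p - 1) * (q - 1) ≤ n - 2 * p * g)
  have hn' : n = p * (2 * g + x) + q * y := by
    rw [mul_add, add_assoc, hxy, ← mul_assoc, mul_comm p 2]
    omega
  exact hn' ▸ hS _ (by omega) y

theorem ncard_inter_Iio_add_ncard_inter_Ico (S : Set ℕ) {a b : ℕ} (hab : a ≤ b) :
    (S ∩ Iio a).ncard + (S ∩ Ico a b).ncard = (S ∩ Iio b).ncard := by
  rw [← ncard_union_eq ((Iio_disjoint_Ici le_rfl).mono inter_subset_right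
    (inter_subset_right.trans Ico_subset_Ici_self))
    ((finite_Iio a).inter_of_right S) ((finite_Ico a b).inter_of_right S),
    ← inter_union_distrib_left, Iio_union_Ico_eq_Iio hab]

noncomputable def tiltedCount (S : Set ℕ) (t : ℝ) (m : ℤ) : ℝ :=
  (S ∩ Iio m.toNat).ncard - t * m / 2

section tiltedCount

variable {S : Set ℕ} {t : ℝ}

theorem tiltedCount_sub_tiltedCount {a b : ℤ} (hab : a ≤ b) :
    tiltedCount S t b - tiltedCount S t a = (S ∩ Ico a.toNat b.toNat).ncard - t * (b - a) / 2 := by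
  rw [tiltedCount, tiltedCount,
    ← ncard_inter_Iio_add_ncard_inter_Ico S (by omega : a.toNat ≤ b.toNat)]
  push_cast
  ring

theorem tiltedCount_zero_le (ht : 0 ≤ t) {m : ℤ} (hm : m ≤ 0) :
    tiltedCount S t 0 ≤ tiltedCount S t m := by
  have : m.toNat = 0 := Int.toNat_of_nonpos hm
  simp only [tiltedCount, this, Int.toNat_zero, Int.cast_zero, mul_zero, zero_div, sub_zero]
  have : t * m ≤ 0 := mul_nonpos_of_nonneg_of_nonpos ht (by exact_mod_cast hm)
  linarith

theorem tiltedCount_le_of_Ici_subset (ht : t ≤ 2) {N : ℕ} (hN : Ici N ⊆ S) {m : ℤ}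
    (hm : N ≤ m) : tiltedCount S t N ≤ tiltedCount S t m := by
  have hfull : S ∩ Ico (N : ℤ).toNat m.toNat = Ico N m.toNat := by
    rw [Int.toNat_natCast]
    exact inter_eq_right.2 (Ico_subset_Ici_self.trans hN)
  have hm' : (m.toNat : ℝ) = m := by exact_mod_cast Int.toNat_of_nonneg (by omega)
  have := tiltedCount_sub_tiltedCount (S := S) (t := t) hm
  rw [hfull, ncard_Ico_nat, Nat.cast_sub (by omega), hm'] at this
  push_cast at this
  have hmN : (N : ℝ) ≤ m := by exact_mod_cast hm
  nlinarith

theorem tiltedCount_add_le {a : ℤ} (ha : 0 ≤ a) {p i : ℕ}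
    (hcount : (S ∩ Ico a.toNat (a.toNat + p)).ncard ≤ i) (ht : 2 * i ≤ t * p) :
    tiltedCount S t (a + p) ≤ tiltedCount S t a := by
  have := tiltedCount_sub_tiltedCount (S := S) (t := t) (by omega : a ≤ a + p)
  rw [show (a + p).toNat = a.toNat + p by omega] at this
  push_cast at this
  have : ((S ∩ Ico a.toNat (a.toNat + p)).ncard : ℝ) ≤ i := by exact_mod_cast hcount
  linarith

theorem tiltedCount_sub_le {m : ℤ} {p i : ℕ}
    (hcount : i + 1 ≤ (S ∩ Ico (m.toNat - p) m.toNat).ncard) (ht : t * p ≤ 2 * (i + 1)) :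
    tiltedCount S t (m - p) ≤ tiltedCount S t m := by
  have := tiltedCount_sub_tiltedCount (S := S) (t := t) (by omega : m - p ≤ m)
  rw [show (m - p).toNat = m.toNat - p by omega] at this
  push_cast at this
  have : ((i : ℝ) + 1) ≤ (S ∩ Ico (m.toNat - p) m.toNat).ncard := by exact_mod_cast hcount
  linarith

end tiltedCount

theorem stmt7_general (p q g : ℕ) (hp : 2 ≤ p) (hq : 0 < q) (hpq : Nat.Coprime p q)
    (SK : Set ℕ) (hup : ∀ m, 2 * g ≤ m → m ∈ SK)
    (S : Set ℕ) (hS : S = {n : ℕ | ∃ a ∈ SK, ∃ b : ℕ, n = p * a + q * b})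
    (phi : ℤ → ℤ) (hphi : ∀ m : ℤ, phi m = ((S ∩ Set.Iio m.toNat).ncard : ℤ))
    (Phi : ℝ → ℤ → ℝ) (hPhi : ∀ t m, Phi t m = (phi m : ℝ) - t * m / 2)
    (i : ℕ) (hi : i < p) (t : ℝ)
    (ht1 : 2 * i / (p : ℝ) ≤ t) (ht2 : t ≤ 2 * (i + 1) / (p : ℝ)) :
    sInf (Phi t '' {m : ℤ | 0 ≤ m ∧ m ≤ 2 * (p : ℤ) * g + ((p : ℤ) - 1) * ((q : ℤ) - 1)}) =
    sInf (Phi t '' {m : ℤ | (i : ℤ) * q - p < m ∧ m ≤ (i : ℤ) * q + 2 * g * p}) := by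
  have hpR : (0 : ℝ) < p := by positivity
  have hti : 2 * i ≤ t * p := by rwa [div_le_iff₀ hpR] at ht1
  have hti' : t * p ≤ 2 * (i + 1) := by rwa [le_div_iff₀ hpR] at ht2
  have ht2' : t ≤ 2 := ht2.trans <| by
    rw [div_le_iff₀ hpR]
    exact_mod_cast (by omega : 2 * (i + 1) ≤ 2 * p)
  have hS_sub : ∀ n ∈ S, ∃ x y, n = p * x + q * y := by
    rw [hS]
    rintro _ ⟨x, -, y, rfl⟩
    exact ⟨x, y, rfl⟩
  have hS_large : ∀ x, 2 * g ≤ x → ∀ y, p * x + q * y ∈ S := by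
    rw [hS]
    exact fun x hx y => ⟨x, hup x hx, y, rfl⟩
  have hN : ((2 * p * g + (p - 1) * (q - 1) : ℕ) : ℤ) =
      2 * (p : ℤ) * g + ((p : ℤ) - 1) * ((q : ℤ) - 1) := by
    push_cast [show 1 ≤ p by omega, show 1 ≤ q by omega]
    ring
  have hPhi_eq : Phi t = tiltedCount S t := funext fun m => by simp [hPhi, hphi, tiltedCount]
  have hgp : (0 : ℤ) ≤ 2 * g * p := by positivity
  rw [hPhi_eq, ← hN]
  exact sInf_image_Icc_eq_sInf_image_Ioc (p := p) (by positivity) (by positivity) (by omega)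
    (fun m hm => tiltedCount_zero_le ((by positivity : (0 : ℝ) ≤ 2 * i / p).trans ht1) hm)
    (fun m hm => tiltedCount_le_of_Ici_subset ht2'
      (Ici_conductor_subset hpq (by omega) hq hS_large) hm)
    (fun m hm hmL => tiltedCount_add_le hm
      (ncard_inter_Ico_le_of_subset_span hS_sub (by omega)) hti)
    (fun m hm => tiltedCount_sub_le
      (le_ncard_inter_Ico_of_span_subset hpq hi hS_large (by zify; omega)) hti')

/-- Localization of the minimum of `Φ(t,m)` for the formal semigroup of an
L-space cable knot `K_{p,q}` with `2gp ≤ q`, to the window `(iq-p, iq+2gp]`. -/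
theorem stmt7 (p q g : ℕ) (hp : 2 ≤ p) (hq : 0 < q) (hpq : Nat.Coprime p q)
    (hgq : 2 * g * p ≤ q)
    (SK : Set ℕ) (h0 : 0 ∈ SK) (hup : ∀ m, 2 * g ≤ m → m ∈ SK)
    (hcard : (SK ∩ Set.Iio (2 * g)).ncard = g)
    (S : Set ℕ) (hS : S = {n : ℕ | ∃ a ∈ SK, ∃ b : ℕ, n = p * a + q * b})
    (phi : ℤ → ℤ) (hphi : ∀ m : ℤ, phi m = ((S ∩ Set.Iio m.toNat).ncard : ℤ))
    (Phi : ℝ → ℤ → ℝ) (hPhi : ∀ t m, Phi t m = (phi m : ℝ) - t * m / 2)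
    (i : ℕ) (hi : i < p) (t : ℝ)
    (ht1 : 2 * i / (p : ℝ) ≤ t) (ht2 : t ≤ 2 * (i + 1) / (p : ℝ)) :
    sInf (Phi t '' {m : ℤ | 0 ≤ m ∧ m ≤ 2 * (p : ℤ) * g + ((p : ℤ) - 1) * ((q : ℤ) - 1)}) =
    sInf (Phi t '' {m : ℤ | (i : ℤ) * q - p < m ∧ m ≤ (i : ℤ) * q + 2 * g * p}) :=
  stmt7_general p q g hp hq hpq SK hup S hS phi hphi Phi hPhi i hi t ht1 ht2
end

section
/- Let K be a knot with Alexander polynomial Delta_K of degree 2g (g = genus, K an L-space knot so that deg Delta_K = 2g), and let p, q be coprime positive integers with q >= p(2g-1). Then the genus of the cable knot K_{p,q} satisfies g(K_{p,q}) = p*g + (p-1)(q-1)/2. Purely combinatorially: if S_K is a subset of Z_{>=0} with 0 in S_K, Z_{>= 2g} subset of S_K, and #(Z_{>=0} \ S_K) = g with max(Z_{>=0} \ S_K) = 2g - 1, and if S := p*S_K + q*Z_{>=0} with q >= p(2g-1), then the complement of S in Z_{>=0} is finite with exactly p*g + (p-1)(q-1)/2 elements, and its maximum is 2(p*g + (p-1)(q-1)/2)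 - 1. -/
/-!
In the residue class of `q * b` modulo `p` (for `b < p`), an element `n` of `p • S_K + q • ℕ`
can always be written as `p * a + q * b` with `a ∈ S_K`: any other representation
`p * a + q * (b + p * j)` equals `p * (a + q * j) + q * b`, and `a + q * j ≥ q ≥ 2g` lies in `S_K`.
So the gaps in that class are the `⌊q b / p⌋` numbers below `q * b` together with the `g` numbers
`p * a + q * b` for gaps `a` of `S_K`. Summing over `b < p` gives `p g + ∑ ⌊q b / p⌋`, and
`∑_{b < p} ⌊q b / p⌋ = (p - 1)(q - 1) / 2` because `b ↦ q b mod p` permutes `{0, …, p - 1}`.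
The largest gap is `p (2g - 1) + q (p - 1)`.
-/

open Finset

namespace Nat.Coprime

variable {p q : ℕ}

theorem eq_of_mul_modEq_mul (hpq : p.Coprime q) {b b' : ℕ} (hb : b < p) (hb' : b' < p)
    (h : q * b ≡ q * b' [MOD p]) : b = b' :=
  (Nat.ModEq.cancel_left_of_coprime hpq h).eq_of_lt_of_lt hb hb'

theorem injOn_mul_mod (hpq : p.Coprime q) : Set.InjOn (fun b => q * b % p) (range p) :=
  fun _ hb _ hb' h => hpq.eq_of_mul_modEq_mul (mem_range.mp hb) (mem_range.mp hb') h

theorem image_range_mul_mod (hpq : p.Coprime q) :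
    (range p).image (fun b => q * b % p) = range p := by
  refine eq_of_subset_of_card_le (fun n hn => ?_)
    (Finset.card_image_of_injOn hpq.injOn_mul_mod).ge
  obtain ⟨b, hb, rfl⟩ := mem_image.mp hn
  exact mem_range.mpr (Nat.mod_lt _ (by have := mem_range.mp hb; omega))

theorem exists_lt_mul_modEq (hpq : p.Coprime q) (hp : 0 < p) (n : ℕ) :
    ∃ b < p, q * b ≡ n [MOD p] := by
  have hn : n % p ∈ (range p).image (fun b => q * b % p) := by
    rw [hpq.image_range_mul_mod]
    exact mem_range.mpr (Nat.mod_lt n hp)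
  obtain ⟨b, hb, hbn⟩ := mem_image.mp hn
  exact ⟨b, mem_range.mp hb, hbn⟩

theorem sum_range_mul_mod (hpq : p.Coprime q) :
    ∑ b ∈ range p, q * b % p = ∑ b ∈ range p, b := by
  conv_rhs => rw [← hpq.image_range_mul_mod, sum_image hpq.injOn_mul_mod]

theorem sum_range_mul_div (hpq : p.Coprime q) :
    ∑ b ∈ range p, q * b / p = (p - 1) * (q - 1) / 2 := by
  rcases Nat.eq_zero_or_pos p with rfl | hp
  · simp
  have hdiv :
      p * ∑ b ∈ range p, q * b / p + ∑ b ∈ range p, q * b % p = q * ∑ b ∈ range p, b := by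
    rw [mul_sum, mul_sum, ← sum_add_distrib]
    exact sum_congr rfl fun b _ => Nat.div_add_mod _ _
  rw [hpq.sum_range_mul_mod] at hdiv
  have hs := sum_range_id_mul_two p
  set X := ∑ b ∈ range p, q * b / p
  set s := ∑ b ∈ range p, b
  have htwo : p * (2 * X) = p * ((p - 1) * (q - 1)) := by
    calc p * (2 * X) = 2 * (p * X) := by ring
      _ = 2 * (q * s) - s * 2 := by omega
      _ = (q - 1) * (s * 2) := by rw [Nat.sub_one_mul]; ring_nf
      _ = p * ((p - 1) * (q - 1)) := by rw [hs]; ring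
  have := Nat.eq_of_mul_eq_mul_left hp htwo
  omega

theorem even_sub_one_mul_sub_one (hpq : p.Coprime q) : Even ((p - 1) * (q - 1)) := by
  rcases Nat.even_or_odd p with hp | hp
  · have hq : Odd q := by
      rw [← Nat.not_even_iff_odd]
      intro hq
      have := Nat.dvd_gcd hp.two_dvd hq.two_dvd
      rw [hpq] at this
      omega
    exact (Nat.Odd.sub_odd hq odd_one).mul_left _
  · exact (Nat.Odd.sub_odd hp odd_one).mul_right _

theorem two_mul_add_sub_one_mul_sub_one_div_two (hpq : p.Coprime q) {g : ℕ} (hp : 1 ≤ p)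
    (hq : 1 ≤ q) (hg : 1 ≤ g) :
    2 * (p * g + (p - 1) * (q - 1) / 2) = p * (2 * g - 1) + q * (p - 1) + 1 := by
  obtain ⟨k, hk⟩ := hpq.even_sub_one_mul_sub_one
  rw [hk, show (k + k) / 2 = k by omega]
  zify [show 1 ≤ 2 * g by omega, hq, hp] at hk ⊢
  linear_combination -hk

end Nat.Coprime

def cableSemigroup (p q : ℕ) (A : Set ℕ) : Set ℕ := {n | ∃ a ∈ A, ∃ b, n = p * a + q * b}

/-- The gaps of `cableSemigroup p q (↑G)ᶜ` that are congruent to `q * b` modulo `p`. -/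
def classGaps (p q : ℕ) (G : Finset ℕ) (b : ℕ) : Finset ℕ :=
  {n ∈ range (q * b) | n ≡ q * b [MOD p]} ∪ G.image (fun a => p * a + q * b)

def cableGaps (p q : ℕ) (G : Finset ℕ) : Finset ℕ := (range p).biUnion (classGaps p q G)

section CableGaps

variable {p q : ℕ} {G : Finset ℕ} {b n : ℕ}

theorem modEq_of_mem_classGaps (hn : n ∈ classGaps p q G b) : n ≡ q * b [MOD p] := by
  rcases mem_union.mp hn with hn | hn
  · exact (mem_filter.mp hn).2
  · obtain ⟨a, -, rfl⟩ := mem_image.mp hn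
    exact Nat.mul_add_mod p a (q * b)

theorem card_classGaps (hp : 0 < p) : #(classGaps p q G b) = q * b / p + #G := by
  have hdisj : Disjoint {n ∈ range (q * b) | n ≡ q * b [MOD p]}
      (G.image (fun a => p * a + q * b)) := by
    refine disjoint_left.mpr fun n hn hn' => ?_
    obtain ⟨a, -, rfl⟩ := mem_image.mp hn'
    have := mem_range.mp (mem_filter.mp hn).1
    omega
  rw [classGaps, card_union_of_disjoint hdisj, ← Nat.count_eq_card_filter_range,
    Nat.count_modEq_card _ hp, if_neg (lt_irrefl _), add_zero,
    card_image_of_injective _ fun a a' h => Nat.eq_of_mul_eq_mul_left hp (by simpa using h)]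

theorem mem_cableSemigroup_iff {A : Set ℕ} (hA : ∀ t, q ≤ t → t ∈ A) (hpq : p.Coprime q)
    (hb : b < p) (hn : q * b ≡ n [MOD p]) :
    n ∈ cableSemigroup p q A ↔ ∃ a ∈ A, n = p * a + q * b := by
  refine ⟨fun ⟨a, ha, b', hab'⟩ => ?_, fun ⟨a, ha, hab⟩ => ⟨a, ha, b, hab⟩⟩
  have hbb' : b = b' % p := hpq.eq_of_mul_modEq_mul hb (Nat.mod_lt b' (by omega)) <|
    calc q * b ≡ n [MOD p] := hn
      _ = p * a + q * b' := hab'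
      _ ≡ q * b' [MOD p] := Nat.mul_add_mod p a _
      _ ≡ q * (b' % p) [MOD p] := (Nat.mod_modEq b' p).symm.mul_left q
  obtain ⟨j, rfl⟩ : ∃ j, b' = b + p * j := ⟨b' / p, by rw [hbb', Nat.mod_add_div]⟩
  rcases Nat.eq_zero_or_pos j with rfl | hj
  · exact ⟨a, ha, by simpa using hab'⟩
  · exact ⟨a + q * j, hA _ (by nlinarith), by rw [hab']; ring⟩

theorem notMem_cableSemigroup_iff (hpq : p.Coprime q) (hGq : ∀ a ∈ G, a < q) (hb : b < p)
    (hn : q * b ≡ n [MOD p]) : n ∉ cableSemigroup p q (↑G)ᶜ ↔ n ∈ classGaps p q G b := by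
  have hA : ∀ t, q ≤ t → t ∈ (↑G : Set ℕ)ᶜ := fun t ht htG => by
    have := hGq t htG
    omega
  rw [mem_cableSemigroup_iff hA hpq hb hn, classGaps, mem_union, mem_filter, mem_range, mem_image]
  rcases lt_or_ge n (q * b) with hlt | hge
  · refine ⟨fun _ => Or.inl ⟨hlt, hn.symm⟩, fun _ ⟨a, _, ha⟩ => ?_⟩
    omega
  · obtain ⟨t, ht⟩ := (Nat.modEq_iff_dvd' hge).mp hn
    have hpos : 0 < p := by omega
    have hrep : ∀ a, n = p * a + q * b ↔ a = t := fun a => by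
      constructor
      · intro h
        exact Nat.eq_of_mul_eq_mul_left hpos (by omega)
      · rintro rfl
        omega
    simp [hrep, not_lt.mpr hge, eq_comm (a := p * _ + q * b)]

theorem mem_cableGaps_iff (hpq : p.Coprime q) (hb : b < p) (hn : q * b ≡ n [MOD p]) :
    n ∈ cableGaps p q G ↔ n ∈ classGaps p q G b := by
  refine ⟨fun h => ?_, fun h => mem_biUnion.mpr ⟨b, mem_range.mpr hb, h⟩⟩
  obtain ⟨b', hb', hnb'⟩ := mem_biUnion.mp h
  obtain rfl := hpq.eq_of_mul_modEq_mul hb (mem_range.mp hb')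
    (hn.trans (modEq_of_mem_classGaps hnb'))
  exact hnb'

theorem compl_cableSemigroup (hpq : p.Coprime q) (hp : 0 < p) (hGq : ∀ a ∈ G, a < q) :
    (cableSemigroup p q (↑G)ᶜ)ᶜ = ↑(cableGaps p q G) := by
  ext n
  obtain ⟨b, hb, hn⟩ := hpq.exists_lt_mul_modEq hp n
  rw [Set.mem_compl_iff, notMem_cableSemigroup_iff hpq hGq hb hn, mem_coe,
    mem_cableGaps_iff hpq hb hn]

theorem card_cableGaps (hpq : p.Coprime q) (hp : 0 < p) :
    #(cableGaps p q G) = p * #G + (p - 1) * (q - 1) / 2 := by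
  rw [cableGaps, card_biUnion fun b hb b' hb' hne => disjoint_left.mpr fun n hn hn' =>
    hne (hpq.eq_of_mul_modEq_mul (mem_range.mp hb) (mem_range.mp hb')
      ((modEq_of_mem_classGaps hn).symm.trans (modEq_of_mem_classGaps hn')))]
  rw [sum_congr rfl fun b _ => card_classGaps hp, sum_add_distrib, hpq.sum_range_mul_div,
    sum_const, card_range, smul_eq_mul, add_comm]

theorem le_of_mem_cableGaps {m : ℕ} (hm : ∀ a ∈ G, a ≤ m) (hn : n ∈ cableGaps p q G) :
    n ≤ p * m + q * (p - 1) := by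
  obtain ⟨b, hb, hn⟩ := mem_biUnion.mp hn
  have hqb : q * b ≤ q * (p - 1) := Nat.mul_le_mul_left q (by have := mem_range.mp hb; omega)
  rcases mem_union.mp hn with hn | hn
  · have := mem_range.mp (mem_filter.mp hn).1
    omega
  · obtain ⟨a, ha, rfl⟩ := mem_image.mp hn
    have := Nat.mul_le_mul_left p (hm a ha)
    omega

theorem mem_cableGaps_of_mem {m : ℕ} (hp : 0 < p) (hm : m ∈ G) :
    p * m + q * (p - 1) ∈ cableGaps p q G :=
  mem_biUnion.mpr ⟨p - 1, mem_range.mpr (by omega), mem_union_right _ (mem_image_of_mem _ hm)⟩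

end CableGaps

theorem stmt9_general (p q g : ℕ) (hp : 2 ≤ p)
    (hpq : Nat.Coprime p q) (hgq : p * (2 * g - 1) ≤ q)
    (SK : Set ℕ) (h0 : 0 ∈ SK) (hup : ∀ m, 2 * g ≤ m → m ∈ SK)
    (hcard : (SKᶜ : Set ℕ).ncard = g)
    (htop : 2 * g - 1 ∉ SK)
    (S : Set ℕ) (hS : S = {n : ℕ | ∃ a ∈ SK, ∃ b : ℕ, n = p * a + q * b}) :
    (Sᶜ : Set ℕ).Finite ∧
    (Sᶜ : Set ℕ).ncard = p * g + (p - 1) * (q - 1) / 2 ∧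
    2 * (p * g + (p - 1) * (q - 1) / 2) - 1 ∉ S ∧
    ∀ m, 2 * (p * g + (p - 1) * (q - 1) / 2) ≤ m → m ∈ S := by
  have hg : 1 ≤ g := Nat.one_le_iff_ne_zero.mpr fun hg => htop (by simpa [hg] using h0)
  have hfin : SKᶜ.Finite := (Set.finite_lt_nat (2 * g)).subset fun m hm => by
    by_contra h
    exact hm (hup m (not_lt.mp h))
  set G := hfin.toFinset
  have hSK : SK = (↑G)ᶜ := by simp [G]
  have hG : ∀ a ∈ G, a ≤ 2 * g - 1 := fun a ha => by
    by_contra h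
    exact (hfin.mem_toFinset.mp ha) (hup a (by omega))
  have hGq : ∀ a ∈ G, a < q := fun a ha => by
    have := hG a ha
    have : 2 * (2 * g - 1) ≤ p * (2 * g - 1) := Nat.mul_le_mul_right _ hp
    omega
  have htopG : 2 * g - 1 ∈ G := hfin.mem_toFinset.mpr htop
  have hSc : Sᶜ = ↑(cableGaps p q G) := by
    rw [hS, hSK]
    exact compl_cableSemigroup hpq (by omega) hGq
  have hfrob := hpq.two_mul_add_sub_one_mul_sub_one_div_two (by omega)
    (Nat.one_le_of_lt (hGq _ htopG)) hg
  refine ⟨by rw [hSc]; exact finite_toSet _, ?_, ?_, fun m hm => ?_⟩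
  · rw [hSc, Set.ncard_coe_finset, card_cableGaps hpq (by omega), ← hcard,
      Set.ncard_eq_toFinset_card _ hfin]
  · rw [hfrob, Nat.add_sub_cancel, ← Set.mem_compl_iff, hSc]
    exact mem_cableGaps_of_mem (by omega) htopG
  · by_contra hmS
    have := le_of_mem_cableGaps hG (hSc ▸ hmS : m ∈ (cableGaps p q G : Set ℕ))
    omega

/-- Genus of the L-space cable: the gap count of `p·S_K + q·ℤ≥0` is
`pg + (p-1)(q-1)/2` and its Frobenius number is `2(pg + (p-1)(q-1)/2) - 1`. -/
theorem stmt9 (p q g : ℕ) (hp : 2 ≤ p) (hq : 0 < q) (hg : 1 ≤ g)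
    (hpq : Nat.Coprime p q) (hgq : p * (2 * g - 1) ≤ q)
    (SK : Set ℕ) (h0 : 0 ∈ SK) (hup : ∀ m, 2 * g ≤ m → m ∈ SK)
    (hfin : (SKᶜ : Set ℕ).Finite) (hcard : (SKᶜ : Set ℕ).ncard = g)
    (htop : 2 * g - 1 ∉ SK)
    (S : Set ℕ) (hS : S = {n : ℕ | ∃ a ∈ SK, ∃ b : ℕ, n = p * a + q * b}) :
    (Sᶜ : Set ℕ).Finite ∧
    (Sᶜ : Set ℕ).ncard = p * g + (p - 1) * (q - 1) / 2 ∧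
    2 * (p * g + (p - 1) * (q - 1) / 2) - 1 ∉ S ∧
    ∀ m, 2 * (p * g + (p - 1) * (q - 1) / 2) ≤ m → m ∈ S :=
  stmt9_general p q g hp hpq hgq SK h0 hup hcard htop S hS
end
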